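/- arXiv:1302.5415 — 2 statements merged into one kernel-verified Lean document; each statement's English description precedes it below -/
import Mathlib

section
/- Let (M,≤) be a nonempty quasi-ordered set that is sequentially inductive, and let Φ = (φ_i; i ≥ 0) be a sequence of functions φ_i : M → ℝ ∪ {+∞}, each decreasing and bounded below (inf φ_i(M) > −∞ for each i). Then the set max(M;≤;Φ) of (≤,Φ)-maximal points is ≤-cofinal and ≤-invariant in M. -/
/-!
Brezis–Browder ordering principle. For an antitone real function `ψ` bounded below, choose an
ascending sequence in which each `x (n + 1)` almost minimises `ψ` above `x n`, up to `1 / (n + 1)`;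
any upper bound `v` of the sequence then satisfies `ψ v = ψ w` for all `w ≥ v`. An extended-real
function is reduced to this case through an order embedding of `EReal` into `[0, 1]`, and the
countably many functions `φ i` are treated one after the other along a single ascending sequence,
using that maximality for `φ i` passes to every larger point.
-/

open Set

def SequentiallyInductive (M : Type*) [Preorder M] : Prop :=
  ∀ x : ℕ → M, (∀ n, x n ≤ x (n + 1)) → ∃ v, ∀ n, x n ≤ v

section OrderingPrinciple

variable {M : Type*} [Preorder M]

def IsMaximalPoint {ι α : Type*} (φ : ι → M → α) (z : M) : Prop :=
  ∀ i w, z ≤ w → φ i z = φ i w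

theorem IsMaximalPoint.of_le {ι α : Type*} {φ : ι → M → α} {z y : M}
    (hz : IsMaximalPoint φ z) (hzy : z ≤ y) : IsMaximalPoint φ y :=
  fun i w hyw => (hz i y hzy).symm.trans (hz i w (hzy.trans hyw))

theorem exists_le_forall_le_lt_add {ψ : M → ℝ} (hψ : BddBelow (range ψ)) (a : M) {ε : ℝ}
    (hε : 0 < ε) : ∃ b, a ≤ b ∧ ∀ w, a ≤ w → ψ b < ψ w + ε := by
  have hne : (ψ '' Ici a).Nonempty := ⟨ψ a, a, le_rfl, rfl⟩
  have hbdd : BddBelow (ψ '' Ici a) := hψ.mono (image_subset_range ψ _)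
  obtain ⟨_, ⟨b, hab, rfl⟩, hb⟩ := Real.lt_sInf_add_pos hne hε
  exact ⟨b, hab, fun w haw => hb.trans_le (by gcongr; exact csInf_le hbdd ⟨w, haw, rfl⟩)⟩

theorem exists_le_forall_le_eq_of_antitone_real (hM : SequentiallyInductive M) {ψ : M → ℝ}
    (hψ : Antitone ψ) (hbdd : BddBelow (range ψ)) (u : M) :
    ∃ v, u ≤ v ∧ ∀ w, v ≤ w → ψ v = ψ w := by
  choose next hle hlt using fun (n : ℕ) a =>
    exists_le_forall_le_lt_add hbdd a (Nat.one_div_pos_of_nat (n := n))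
  let x : ℕ → M := fun n => Nat.rec u (fun n a => next n a) n
  obtain ⟨v, hv⟩ := hM x fun n => hle n (x n)
  refine ⟨v, hv 0, fun w hvw => le_antisymm ?_ (hψ hvw)⟩
  refine le_of_forall_pos_lt_add fun ε hε => ?_
  obtain ⟨n, hn⟩ := exists_nat_one_div_lt hε
  calc ψ v ≤ ψ (x (n + 1)) := hψ (hv (n + 1))
    _ < ψ w + 1 / (n + 1) := hlt n (x n) w ((hv n).trans hvw)
    _ < ψ w + ε := by gcongr

theorem exists_le_forall_le_eq_of_antitone_ereal (hM : SequentiallyInductive M) {φ : M → EReal}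
    (hφ : Antitone φ) (u : M) : ∃ v, u ≤ v ∧ ∀ w, v ≤ w → φ v = φ w := by
  let θ : EReal → ℝ := fun t => ENNReal.orderIsoUnitIntervalBirational (ENNReal.logOrderIso.symm t)
  have hθ : StrictMono θ := (Subtype.strictMono_coe _).comp
    (ENNReal.orderIsoUnitIntervalBirational.strictMono.comp ENNReal.logOrderIso.symm.strictMono)
  have hbdd : BddBelow (range (θ ∘ φ)) :=
    ⟨0, forall_mem_range.2 fun x => (ENNReal.orderIsoUnitIntervalBirational _).2.1⟩
  obtain ⟨v, huv, hv⟩ := exists_le_forall_le_eq_of_antitone_real hM (hθ.monotone.comp_antitone hφ)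
    hbdd u
  exact ⟨v, huv, fun w hvw => hθ.injective (hv w hvw)⟩

theorem exists_le_isMaximalPoint (hM : SequentiallyInductive M) {φ : ℕ → M → EReal}
    (hφ : ∀ i, Antitone (φ i)) (u : M) : ∃ v, u ≤ v ∧ IsMaximalPoint φ v := by
  choose next hle hmax using fun i a => exists_le_forall_le_eq_of_antitone_ereal hM (hφ i) a
  let x : ℕ → M := fun n => Nat.rec u (fun n a => next n a) n
  obtain ⟨v, hv⟩ := hM x fun n => hle n (x n)
  refine ⟨v, hv 0, fun i w hvw => ?_⟩
  -- `x (i + 1)` is already maximal for `φ i`, and `x (i + 1) ≤ v ≤ w`.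
  rw [← hmax i (x i) v (hv (i + 1)), hmax i (x i) w ((hv (i + 1)).trans hvw)]

end OrderingPrinciple

theorem stmt_12_general {M : Type*} (le : M → M → Prop)
    (hrefl : ∀ x, le x x)
    (htrans : ∀ x y z, le x y → le y z → le x z)
    (hind : ∀ x : ℕ → M, (∀ n, le (x n) (x (n + 1))) → ∃ v, ∀ n, le (x n) v)
    (φ : ℕ → M → EReal)
    (hdecr : ∀ i, ∀ x y, le x y → φ i y ≤ φ i x) :
    (∀ u : M, ∃ v, le u v ∧ ∀ i, ∀ w, le v w → φ i v = φ i w) ∧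
    (∀ z, (∀ i, ∀ w, le z w → φ i z = φ i w) →
      ∀ y, le z y → ∀ i, ∀ w, le y w → φ i y = φ i w) := by
  let _ : Preorder M := { le, le_refl := hrefl, le_trans := htrans }
  exact ⟨exists_le_isMaximalPoint hind fun i x y => hdecr i x y,
    fun z hz y hzy => IsMaximalPoint.of_le hz hzy⟩

/-- (BBg-P3): if `(M, le)` is a nonempty sequentially inductive quasi-ordered set and
`Φ = (φ i)` is a sequence of decreasing, bounded below functions with values in
`ℝ ∪ {+∞}`, then the set of `(le, Φ)`-maximal points is `le`-cofinal and `le`-invariant. -/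
theorem stmt_12 {M : Type*} [Nonempty M] (le : M → M → Prop)
    (hrefl : ∀ x, le x x)
    (htrans : ∀ x y z, le x y → le y z → le x z)
    (hind : ∀ x : ℕ → M, (∀ n, le (x n) (x (n + 1))) → ∃ v, ∀ n, le (x n) v)
    (φ : ℕ → M → EReal)
    (hne_bot : ∀ i x, φ i x ≠ ⊥)
    (hdecr : ∀ i, ∀ x y, le x y → φ i y ≤ φ i x)
    (hbdd : ∀ i, ∃ c : ℝ, ∀ x, (c : EReal) ≤ φ i x) :
    (∀ u : M, ∃ v, le u v ∧ ∀ i, ∀ w, le v w → φ i v = φ i w) ∧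
    (∀ z, (∀ i, ∀ w, le z w → φ i z = φ i w) →
      ∀ y, le z y → ∀ i, ∀ w, le y w → φ i y = φ i w) :=
  stmt_12_general le hrefl htrans hind φ hdecr
end

section
/- (Descending Ekeland variational principle.) Let (X,d) be a complete metric space and φ : X → ℝ ∪ {+∞} be proper (Dom(φ) := {x : φ(x) < +∞} is nonempty), bounded below, and descending d-lsc. Then for each u ∈ Dom(φ) there exists v ∈ Dom(φ) such that: (i) d(u,v) ≤ φ(u) − φ(v); and (ii) for every x ∈ X with x ≠ v one has d(v,x) + φ(x) > φ(v) (in the extended reals). -/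
/-!
Let `S x = {y | d(x, y) + φ y ≤ φ x}`; these sets shrink along their own points. Choose `x₀ ∈ S u`
and `xₙ₊₁ ∈ S xₙ` with `φ xₙ₊₁` within `2⁻⁽ⁿ⁺¹⁾` of the infimum of `φ` on `S xₙ`; then `S xₙ` lies in
the ball of radius `2⁻ⁿ` about `xₙ`, so `(xₙ)` is Cauchy with a limit `v`. Since `φ xₙ` decreases,
descending lower semicontinuity gives `φ v ≤ φ xₙ`, which is exactly what is needed to pass to the
limit in `d(xₙ, xₘ) + φ xₘ ≤ φ xₙ` and put `v` in every `S xₙ`. A point of `S v` then lies in every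
`S xₙ`, hence is also the limit of `(xₙ)`, i.e. equals `v`.
-/

open Filter Topology Metric

theorem EReal.exists_mem_forall_le_add {α : Type*} {s : Set α} (hs : s.Nonempty) {f : α → EReal}
    {c : ℝ} (hc : ∀ x ∈ s, (c : EReal) ≤ f x) {ε : ℝ} (hε : 0 < ε) :
    ∃ y ∈ s, ∀ z ∈ s, f y ≤ f z + ε := by
  set m := sInf (f '' s)
  by_cases hm : m = ⊤
  · obtain ⟨y, hy⟩ := hs
    refine ⟨y, hy, fun z hz => ?_⟩
    rw [sInf_eq_top.1 hm (f z) ⟨z, hz, rfl⟩, EReal.top_add_coe]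
    exact le_top
  have hmbot : m ≠ ⊥ :=
    ne_bot_of_le_ne_bot (EReal.coe_ne_bot c) (le_sInf <| by rintro _ ⟨x, hx, rfl⟩; exact hc x hx)
  have hlt : m < m + ε := by
    rw [← EReal.coe_toReal hm hmbot]
    exact_mod_cast lt_add_of_pos_right _ hε
  obtain ⟨_, ⟨y, hy, rfl⟩, hy_lt⟩ := sInf_lt_iff.1 hlt
  exact ⟨y, hy, fun z hz => hy_lt.le.trans (by gcongr; exact sInf_le ⟨z, hz, rfl⟩)⟩

section Ekeland

variable {X : Type*} [MetricSpace X] (φ : X → EReal)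

def ekelandSet (x : X) : Set X := {y | (dist x y : EReal) + φ y ≤ φ x}

variable {φ}

@[simp]
theorem mem_ekelandSet {x y : X} : y ∈ ekelandSet φ x ↔ (dist x y : EReal) + φ y ≤ φ x :=
  Iff.rfl

theorem mem_ekelandSet_self (x : X) : x ∈ ekelandSet φ x := by
  simp

theorem le_of_mem_ekelandSet {x y : X} (hy : y ∈ ekelandSet φ x) : φ y ≤ φ x :=
  le_trans (le_add_of_nonneg_left (EReal.coe_nonneg.2 dist_nonneg)) hy

theorem ekelandSet_subset_of_mem {x y : X} (hy : y ∈ ekelandSet φ x) :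
    ekelandSet φ y ⊆ ekelandSet φ x := fun z hz =>
  calc (dist x z : EReal) + φ z ≤ ((dist x y + dist y z : ℝ) : EReal) + φ z := by
        gcongr
        exact dist_triangle x y z
    _ = (dist x y : EReal) + ((dist y z : EReal) + φ z) := by rw [EReal.coe_add, add_assoc]
    _ ≤ (dist x y : EReal) + φ y := by gcongr; exact hz
    _ ≤ φ x := hy

theorem ekelandSet_subset_closedBall {y : X} {ε : ℝ} (hy : φ y ≠ ⊤) (hbot : ∀ z, φ z ≠ ⊥)
    (hmin : ∀ z ∈ ekelandSet φ y, φ y ≤ φ z + ε) : ekelandSet φ y ⊆ closedBall y ε := by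
  intro z hz
  have hztop : φ z ≠ ⊤ := ne_top_of_le_ne_top hy (le_of_mem_ekelandSet hz)
  lift φ z to ℝ using ⟨hztop, hbot z⟩ with r hr
  have := (mem_ekelandSet.1 hz).trans (hmin z hz)
  rw [← hr, ← EReal.coe_add, ← EReal.coe_add, EReal.coe_le_coe_iff] at this
  rw [mem_closedBall, dist_comm]
  linarith

theorem mem_ekelandSet_of_tendsto {x : ℕ → X} {y v : X} (hx : Tendsto x atTop (𝓝 v))
    (hmem : ∀ᶠ n in atTop, x n ∈ ekelandSet φ y) (hle : ∀ n, φ v ≤ φ (x n)) :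
    v ∈ ekelandSet φ y := by
  have hclosed : IsClosed {z | (dist y z : EReal) + φ v ≤ φ y} :=
    isClosed_le (continuous_iff_continuousAt.2 fun z =>
      (EReal.continuousAt_add (by simp) (by simp)).comp
        ((continuous_coe_real_ereal.comp (continuous_const.dist continuous_id)).prodMk
          continuous_const).continuousAt) continuous_const
  exact hclosed.mem_of_tendsto hx (hmem.mono fun n hn =>
    le_trans (by gcongr; exact hle n) (mem_ekelandSet.1 hn))

theorem exists_seq_ekelandSet {c : ℝ} (hc : ∀ x, (c : EReal) ≤ φ x) {u : X} (hu : φ u ≠ ⊤) :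
    ∃ x : ℕ → X, x 0 ∈ ekelandSet φ u ∧ (∀ n, x (n + 1) ∈ ekelandSet φ (x n)) ∧
      ∀ n, ekelandSet φ (x n) ⊆ closedBall (x n) ((1 / 2) ^ n) := by
  choose next hnext_mem hnext_le using fun (y : X) (n : ℕ) =>
    EReal.exists_mem_forall_le_add ⟨y, mem_ekelandSet_self (φ := φ) y⟩ (fun z _ => hc z)
      (ε := (1 / 2) ^ n) (by positivity)
  let x : ℕ → X := fun n => Nat.rec (next u 0) (fun n y => next y (n + 1)) n
  have hx0 : x 0 ∈ ekelandSet φ u := hnext_mem u 0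
  have hsucc : ∀ n, x (n + 1) ∈ ekelandSet φ (x n) := fun n => hnext_mem (x n) (n + 1)
  have hfin : ∀ n, φ (x n) ≠ ⊤ := by
    intro n
    induction n with
    | zero => exact ne_top_of_le_ne_top hu (le_of_mem_ekelandSet hx0)
    | succ n ih => exact ne_top_of_le_ne_top ih (le_of_mem_ekelandSet (hsucc n))
  refine ⟨x, hx0, hsucc, fun n => ekelandSet_subset_closedBall (hfin n)
    (fun z => ne_bot_of_le_ne_bot (EReal.coe_ne_bot c) (hc z)) fun z hz => ?_⟩
  cases n with
  | zero => exact hnext_le u 0 z (ekelandSet_subset_of_mem hx0 hz)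
  | succ n => exact hnext_le (x n) (n + 1) z (ekelandSet_subset_of_mem (hsucc n) hz)

end Ekeland

theorem stmt_17_general {X : Type*} [MetricSpace X] [CompleteSpace X]
    (φ : X → EReal)
    (hbdd : ∃ c : ℝ, ∀ x, (c : EReal) ≤ φ x)
    (hlsc : ∀ x : ℕ → X, ∀ l : X,
      Filter.Tendsto x Filter.atTop (nhds l) →
      (∀ n, φ (x (n + 1)) ≤ φ (x n)) → ∀ n, φ l ≤ φ (x n)) :
    ∀ u, φ u ≠ ⊤ →
      ∃ v, φ v ≠ ⊤ ∧ (dist u v : EReal) ≤ φ u - φ v ∧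
        ∀ x, x ≠ v → φ v < (dist v x : EReal) + φ x := by
  intro u hu
  obtain ⟨c, hc⟩ := hbdd
  obtain ⟨x, hx0, hsucc, hball⟩ := exists_seq_ekelandSet hc hu
  have hanti : Antitone fun n => ekelandSet φ (x n) :=
    antitone_nat_of_succ_le fun n => ekelandSet_subset_of_mem (hsucc n)
  have hdist : ∀ n, dist (x n) (x (n + 1)) ≤ 1 * (1 / 2) ^ n := fun n => by
    simpa [dist_comm] using hball n (hsucc n)
  obtain ⟨v, hv⟩ :=
    cauchySeq_tendsto_of_complete (cauchySeq_of_le_geometric _ _ (by norm_num) hdist)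
  have hφv : ∀ n, φ v ≤ φ (x n) := hlsc x v hv fun n => le_of_mem_ekelandSet (hsucc n)
  have hvS : ∀ n, v ∈ ekelandSet φ (x n) := fun n =>
    mem_ekelandSet_of_tendsto hv
      (eventually_atTop.2 ⟨n, fun m hm => hanti hm (mem_ekelandSet_self _)⟩) hφv
  have hvu : v ∈ ekelandSet φ u := ekelandSet_subset_of_mem hx0 (hvS 0)
  have hvtop : φ v ≠ ⊤ := ne_top_of_le_ne_top hu (le_of_mem_ekelandSet hvu)
  have hvbot : φ v ≠ ⊥ := ne_bot_of_le_ne_bot (EReal.coe_ne_bot c) (hc v)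
  refine ⟨v, hvtop, (EReal.le_sub_iff_add_le (.inl hvbot) (.inl hvtop)).2 hvu, fun y hyv => ?_⟩
  contrapose! hyv
  have hy : ∀ n, dist (x n) y ≤ (1 / 2) ^ n := fun n => by
    simpa [dist_comm] using hball n (ekelandSet_subset_of_mem (hvS n) hyv)
  have hxy : Tendsto x atTop (𝓝 y) :=
    tendsto_iff_dist_tendsto_zero.2 <| squeeze_zero (fun _ => dist_nonneg) hy <|
      tendsto_pow_atTop_nhds_zero_of_lt_one (by norm_num) (by norm_num)
  exact tendsto_nhds_unique hxy hv

/-- Descending Ekeland variational principle: on a complete metric space `(X, d)`, for a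
proper, bounded below, descending `d`-lsc function `φ : X → ℝ ∪ {+∞}`, each `u ∈ Dom(φ)`
admits a point `v ∈ Dom(φ)` with `d(u, v) ≤ φ u − φ v`, and such that every `x ≠ v`
satisfies `d(v, x) + φ x > φ v`. -/
theorem stmt_17 {X : Type*} [MetricSpace X] [CompleteSpace X]
    (φ : X → EReal)
    (hne_bot : ∀ x, φ x ≠ ⊥)
    (hproper : ∃ x, φ x ≠ ⊤)
    (hbdd : ∃ c : ℝ, ∀ x, (c : EReal) ≤ φ x)
    (hlsc : ∀ x : ℕ → X, ∀ l : X,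
      Filter.Tendsto x Filter.atTop (nhds l) →
      (∀ n, φ (x (n + 1)) ≤ φ (x n)) → ∀ n, φ l ≤ φ (x n)) :
    ∀ u, φ u ≠ ⊤ →
      ∃ v, φ v ≠ ⊤ ∧ (dist u v : EReal) ≤ φ u - φ v ∧
        ∀ x, x ≠ v → φ v < (dist v x : EReal) + φ x :=
  stmt_17_general φ hbdd hlsc
end
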